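/- arXiv:2506.20656 — 2 statements merged into one kernel-verified Lean document; each statement's English description precedes it below -/
import Mathlib

section
/- Fix natural numbers k ≥ 2, n ≥ 1 and an integer c with 2 ≤ c ≤ k^n − 1. Set j = ⌊log_k (k^n + 1 − c)⌋ and x = k + 1 − ⌊(k^n + 1 − c) / k^j⌋, and let t~ be the traversal string of length n with t~(ℓ) = 1 for 1 ≤ ℓ ≤ j, t~(j+1) = x, and t~(ℓ) = k for ℓ > j + 1. Then A(t~) ≤ c ≤ B(t~), and every traversal string t′ of length n that is lexicographically smaller than t~ satisfies B(t′) < c. In other words, t~ is the lexicographically least traversal string whose landing range contains c. -/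
/-- The smallest chip that can land at the vertex with traversal string `t`:
`A(t) = ∏_{ℓ=1}^n t(ℓ)`. -/
def chipA (n : ℕ) (t : Fin n → ℕ) : ℤ := ∏ ℓ : Fin n, (t ℓ : ℤ)

/-- The largest chip that can land at the vertex with traversal string `t`:
`B(t) = k^n + 1 - ∏_{ℓ=1}^n (k + 1 - t(ℓ))`. -/
def chipB (k n : ℕ) (t : Fin n → ℕ) : ℤ :=
  (k : ℤ) ^ n + 1 - ∏ ℓ : Fin n, ((k : ℤ) + 1 - (t ℓ : ℤ))

/-- Lexicographic order on traversal strings. -/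
def lexLt {n : ℕ} (a b : Fin n → ℕ) : Prop :=
  ∃ ℓ : Fin n, (∀ m : Fin n, m < ℓ → a m = b m) ∧ a ℓ < b ℓ

lemma prod_three (a b c' : ℤ) {j n : ℕ} (h : j < n) :
    (∏ i ∈ Finset.range n, (if i < j then a else if i = j then b else c'))
      = a ^ j * b * c' ^ (n - j - 1) := by
  rw [← Finset.prod_range_mul_prod_Ico _ h.le,
    Finset.prod_eq_prod_Ico_succ_bot h]
  have h1 : (∏ i ∈ Finset.range j, (if i < j then a else if i = j then b else c')) = a ^ j := by
    rw [Finset.prod_congr rfl (fun i hi => if_pos (Finset.mem_range.mp hi)),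
      Finset.prod_const, Finset.card_range]
  have h2 : (∏ i ∈ Finset.Ico (j+1) n, (if i < j then a else if i = j then b else c'))
      = c' ^ (n - j - 1) := by
    rw [Finset.prod_congr rfl (fun i hi => ?_), Finset.prod_const, Nat.card_Ico]
    · congr 1
    · have := (Finset.mem_Ico.mp hi).1
      rw [if_neg (by omega), if_neg (by omega)]
  rw [h1, h2, if_neg (lt_irrefl j), if_pos rfl]
  ring

lemma fin_prod_ite (n j : ℕ) (h : j < n) (a b c' : ℤ) :
    (∏ ℓ : Fin n, (if (ℓ : ℕ) < j then a else if (ℓ : ℕ) = j then b else c'))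
      = a ^ j * b * c' ^ (n - j - 1) :=
  (Fin.prod_univ_eq_prod_range (fun i => if i < j then a else if i = j then b else c') n).trans
    (prod_three a b c' h)

lemma key_ineq (kk q A B M : ℤ) (hk : 2 ≤ kk) (hq1 : 1 ≤ q) (hqk : q ≤ kk - 1)
    (hA : 1 ≤ A) (hB : 1 ≤ B) (hM : M ≤ (q+1)*B - 1) :
    (kk + 1 - q) * A ≤ A * B * kk + 1 - M := by
  rcases le_total A B with h | h
  · nlinarith [mul_nonneg (by linarith : (0:ℤ) ≤ kk - 1 - q) (by linarith : (0:ℤ) ≤ B - A),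
      mul_nonneg (by linarith : (0:ℤ) ≤ A - 1) (by nlinarith : (0:ℤ) ≤ kk * B - 2)]
  · nlinarith [mul_nonneg (by linarith : (0:ℤ) ≤ q - 1) (by linarith : (0:ℤ) ≤ A - B),
      mul_nonneg (by linarith : (0:ℤ) ≤ B - 1) (by nlinarith : (0:ℤ) ≤ kk * A - 2)]

set_option maxHeartbeats 1600000 in
/-- with `j = ⌊log_k (k^n + 1 - c)⌋`, `x = k + 1 - ⌊(k^n + 1 - c) / k^j⌋`,
the string `t~` consisting of `j` copies of `1`, then `x`, then all `k`s, is the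
lexicographically least traversal string whose landing range contains `c`:
`A(t~) ≤ c ≤ B(t~)`, and any valid string lexicographically smaller than `t~` has
`B(t') < c`. -/
theorem leftmost_vertex_for_chip (k n c : ℕ) (hk : 2 ≤ k) (hn : 1 ≤ n)
    (hc1 : 2 ≤ c) (hc2 : c ≤ k ^ n - 1) :
    let j := Nat.log k (k ^ n + 1 - c)
    let x := k + 1 - (k ^ n + 1 - c) / k ^ j
    let ttilde : Fin n → ℕ := fun ℓ =>
      if (ℓ : ℕ) < j then 1 else if (ℓ : ℕ) = j then x else k
    (chipA n ttilde ≤ (c : ℤ) ∧ (c : ℤ) ≤ chipB k n ttilde) ∧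
      ∀ t' : Fin n → ℕ, (∀ ℓ, 1 ≤ t' ℓ ∧ t' ℓ ≤ k) →
        lexLt t' ttilde → chipB k n t' < (c : ℤ) := by
  intro j x ttilde
  have hj' : j = Nat.log k (k ^ n + 1 - c) := rfl
  have hx' : x = k + 1 - (k ^ n + 1 - c) / k ^ j := rfl
  have htt' : ttilde = fun ℓ : Fin n =>
      if (ℓ : ℕ) < j then 1 else if (ℓ : ℕ) = j then x else k := rfl
  clear_value ttilde x j
  obtain ⟨m, hm⟩ : ∃ m, m = k ^ n + 1 - c := ⟨_, rfl⟩
  rw [← hm] at hj' hx'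
  have hk1 : 1 < k := hk
  have hkn : k ≤ k ^ n := by
    calc k = k ^ 1 := (pow_one k).symm
    _ ≤ k ^ n := Nat.pow_le_pow_right (by omega) hn
  have hm2 : 2 ≤ m := by omega
  have hmlt : m < k ^ n := by omega
  obtain ⟨q, hqdef⟩ : ∃ q, q = m / k ^ j := ⟨_, rfl⟩
  rw [← hqdef] at hx'
  have hkj : 0 < k ^ j := Nat.pow_pos (by omega)
  have hpow : k ^ j ≤ m := by
    rw [hj']; exact Nat.pow_log_le_self k (by omega)
  have hpow2 : m < k ^ (j + 1) := by
    rw [hj']; exact Nat.lt_pow_succ_log_self hk1 m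
  have hjn : j < n := by
    rw [hj']; exact Nat.log_lt_of_lt_pow (by omega) hmlt
  have hq1 : 1 ≤ q := by
    rw [hqdef]; exact (Nat.one_le_div_iff hkj).mpr hpow
  have hqk : q < k := by
    rw [hqdef, Nat.div_lt_iff_lt_mul hkj]
    calc m < k ^ (j+1) := hpow2
    _ = k * k ^ j := by ring
  have hql : q * k ^ j ≤ m := by
    rw [hqdef]; exact Nat.div_mul_le_self m (k ^ j)
  have hqu : m + 1 ≤ (q + 1) * k ^ j := by
    have h1 : k ^ j * q + m % k ^ j = m := by
      rw [hqdef]; exact Nat.div_add_mod m (k ^ j)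
    have h2 := Nat.mod_lt m hkj
    nlinarith
  have hx2 : 2 ≤ x := by omega
  have hxk : x ≤ k := by omega
  -- casts
  have hmZ : (m : ℤ) = (k : ℤ) ^ n + 1 - c := by
    rw [hm, Nat.cast_sub (show c ≤ k ^ n + 1 by omega)]; push_cast; ring
  have hcZ : (c : ℤ) = (k : ℤ) ^ n + 1 - m := by linarith
  have hxZ : (x : ℤ) = (k : ℤ) + 1 - q := by
    rw [hx', Nat.cast_sub (show q ≤ k + 1 by omega)]; push_cast; ring
  have hq1Z : (1:ℤ) ≤ (q:ℤ) := by exact_mod_cast hq1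
  have hqkZ : (q:ℤ) ≤ (k:ℤ) - 1 := by
    have h1 : (q:ℤ) < (k:ℤ) := by exact_mod_cast hqk
    omega
  have hkZ : (2:ℤ) ≤ (k:ℤ) := by exact_mod_cast hk
  have hBpos : (1:ℤ) ≤ (k:ℤ) ^ j := one_le_pow₀ (by linarith)
  have hApos : (1:ℤ) ≤ (k:ℤ) ^ (n - j - 1) := one_le_pow₀ (by linarith)
  have hsplit : (k:ℤ) ^ n = (k:ℤ) ^ (n - j - 1) * (k:ℤ) ^ j * k := by
    rw [← pow_add, ← pow_succ]; congr 1; omega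
  have hquZ : (m : ℤ) + 1 ≤ ((q:ℤ) + 1) * (k:ℤ) ^ j := by exact_mod_cast hqu
  have hqlZ : (q:ℤ) * (k:ℤ) ^ j ≤ (m : ℤ) := by exact_mod_cast hql
  -- product computations for ttilde
  have httZ : ∀ ℓ : Fin n, (ttilde ℓ : ℤ) =
      (if (ℓ : ℕ) < j then (1:ℤ) else if (ℓ : ℕ) = j then (x:ℤ) else (k:ℤ)) := by
    intro ℓ; simp only [htt']; split_ifs <;> simp
  have hA : chipA n ttilde = (x : ℤ) * (k : ℤ) ^ (n - j - 1) := by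
    unfold chipA
    rw [Finset.prod_congr rfl (fun ℓ _ => httZ ℓ), fin_prod_ite n j hjn, one_pow, one_mul]
  have hBtt : ∀ ℓ : Fin n, ((k:ℤ) + 1 - (ttilde ℓ : ℤ)) =
      (if (ℓ : ℕ) < j then (k:ℤ) else if (ℓ : ℕ) = j then (q:ℤ) else (1:ℤ)) := by
    intro ℓ; rw [httZ ℓ]
    split_ifs
    · ring
    · rw [hxZ]; ring
    · ring
  have hB : chipB k n ttilde = (k : ℤ) ^ n + 1 - (k : ℤ) ^ j * q := by
    unfold chipB
    rw [Finset.prod_congr rfl (fun ℓ _ => hBtt ℓ), fin_prod_ite n j hjn, one_pow, mul_one]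
  refine ⟨⟨?_, ?_⟩, ?_⟩
  · -- A(t~) ≤ c
    rw [hA, hcZ, hsplit, hxZ]
    exact key_ineq (k:ℤ) (q:ℤ) ((k:ℤ)^(n-j-1)) ((k:ℤ)^j) (m:ℤ)
      hkZ hq1Z hqkZ hApos hBpos (by linarith)
  · -- c ≤ B(t~)
    rw [hB, hcZ]
    linarith
  · -- minimality
    intro t' ht' hlex
    obtain ⟨ℓ₀, hpre, hlt⟩ := hlex
    have hi : j ≤ (ℓ₀ : ℕ) := by
      by_contra h
      have htt : ttilde ℓ₀ = 1 := by
        simp only [htt']; rw [if_pos (show ((ℓ₀ : Fin n) : ℕ) < j by omega)]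
      have h1 := (ht' ℓ₀).1
      omega
    have hprod : (m : ℤ) < ∏ ℓ : Fin n, ((k : ℤ) + 1 - (t' ℓ : ℤ)) := by
      rcases eq_or_lt_of_le hi with hij | hij
      · -- case ℓ₀.val = j
        have hle : (∏ ℓ : Fin n,
            (if (ℓ : ℕ) < j then (k:ℤ) else if (ℓ : ℕ) = j then (q:ℤ)+1 else 1))
            ≤ ∏ ℓ : Fin n, ((k : ℤ) + 1 - (t' ℓ : ℤ)) := by
          apply Finset.prod_le_prod
          · intro ℓ _
            split_ifs <;> linarith
          · intro ℓ _
            rcases lt_trichotomy ((ℓ : Fin n) : ℕ) j with h | h | h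
            · rw [if_pos h]
              have hlℓ : ℓ < ℓ₀ := by rw [Fin.lt_def]; omega
              have he := hpre ℓ hlℓ
              have htt : ttilde ℓ = 1 := by
                simp only [htt']; rw [if_pos h]
              rw [he, htt]; push_cast; linarith
            · rw [if_neg (by omega), if_pos h]
              have heq : ℓ = ℓ₀ := Fin.ext (by omega)
              have htt : ttilde ℓ₀ = x := by
                simp only [htt']
                rw [if_neg (show ¬ ((ℓ₀ : Fin n) : ℕ) < j by omega), if_pos hij.symm]
              rw [heq]
              have h1 : t' ℓ₀ + q ≤ k := by
                have h2 := hlt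
                rw [htt] at h2
                omega
              have h1Z : (t' ℓ₀ : ℤ) + (q:ℤ) ≤ (k:ℤ) := by exact_mod_cast h1
              linarith
            · rw [if_neg (by omega), if_neg (by omega)]
              have h1Z : (t' ℓ : ℤ) ≤ (k:ℤ) := by exact_mod_cast (ht' ℓ).2
              linarith
        rw [fin_prod_ite n j hjn, one_pow, mul_one] at hle
        calc (m:ℤ) < (k:ℤ)^j * ((q:ℤ)+1) := by linarith
        _ ≤ _ := by linarith
      · -- case j < ℓ₀.val
        have hle : (∏ ℓ : Fin n,
            ((if (ℓ : ℕ) < j then (k:ℤ) else if (ℓ : ℕ) = j then (q:ℤ) else 1)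
              * (if ℓ = ℓ₀ then 2 else 1)))
            ≤ ∏ ℓ : Fin n, ((k : ℤ) + 1 - (t' ℓ : ℤ)) := by
          apply Finset.prod_le_prod
          · intro ℓ _
            split_ifs <;> norm_num
          · intro ℓ _
            by_cases hℓ0 : ℓ = ℓ₀
            · rw [if_pos hℓ0, hℓ0,
                if_neg (show ¬ ((ℓ₀ : Fin n) : ℕ) < j by omega),
                if_neg (show ¬ ((ℓ₀ : Fin n) : ℕ) = j by omega), one_mul]
              have htt : ttilde ℓ₀ = k := by
                simp only [htt']
                rw [if_neg (show ¬ ((ℓ₀ : Fin n) : ℕ) < j by omega),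
                  if_neg (show ¬ ((ℓ₀ : Fin n) : ℕ) = j by omega)]
              have h1 : t' ℓ₀ + 1 ≤ k := by
                have h2 := hlt
                rw [htt] at h2
                omega
              have h1Z : (t' ℓ₀ : ℤ) + 1 ≤ (k:ℤ) := by exact_mod_cast h1
              linarith
            · rw [if_neg hℓ0, mul_one]
              rcases lt_trichotomy ((ℓ : Fin n) : ℕ) j with h | h | h
              · rw [if_pos h]
                have hlℓ : ℓ < ℓ₀ := by rw [Fin.lt_def]; omega
                have he := hpre ℓ hlℓ
                have htt : ttilde ℓ = 1 := by
                  simp only [htt']; rw [if_pos h]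
                rw [he, htt]; push_cast; linarith
              · rw [if_neg (by omega), if_pos h]
                have hlℓ : ℓ < ℓ₀ := by rw [Fin.lt_def]; omega
                have he := hpre ℓ hlℓ
                have htt : ttilde ℓ = x := by
                  simp only [htt']
                  rw [if_neg (show ¬ ((ℓ : Fin n) : ℕ) < j by omega), if_pos h]
                rw [he, htt, hxZ]; linarith
              · rw [if_neg (by omega), if_neg (by omega)]
                have h1Z : (t' ℓ : ℤ) ≤ (k:ℤ) := by exact_mod_cast (ht' ℓ).2
                linarith
        rw [Finset.prod_mul_distrib, fin_prod_ite n j hjn, one_pow, mul_one,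
          Finset.prod_ite_eq' Finset.univ ℓ₀ (fun _ => (2:ℤ)),
          if_pos (Finset.mem_univ ℓ₀)] at hle
        have h2q : ((q:ℤ)+1) * (k:ℤ)^j ≤ (k:ℤ)^j * (q:ℤ) * 2 := by
          nlinarith [mul_nonneg (by linarith : (0:ℤ) ≤ (q:ℤ) - 1)
            (by linarith : (0:ℤ) ≤ (k:ℤ)^j)]
        calc (m:ℤ) < (k:ℤ)^j * (q:ℤ) * 2 := by linarith
        _ ≤ _ := hle
    unfold chipB
    rw [hcZ]
    linarith
end

section
/- Let k = 2 and let n ≥ 2 be a natural number. Then spread(1) = spread(2^n) = 1, and for every integer c with 2 ≤ c ≤ 2^n − 1: (a) 2^{n−1} ≤ spread(c) ≤ 2^n − 2; (b) spread(c) = 2^{n−1} if and only if c ∈ {2, 3, 2^n − 2, 2^n − 1}; (c) spread(c) = 2^n − 2 if and only if c ∈ {2^{n−1}, 2^{n−1} + 1}. -/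
/-- The index of a traversal string: the position from the left of the corresponding
vertex in layer `n+1`, namely `1 + ∑_{ℓ=1}^n (t(ℓ) - 1)·k^(n-ℓ)`. -/
def idx (k n : ℕ) (t : Fin n → ℕ) : ℕ :=
  1 + ∑ ℓ : Fin n, (t ℓ - 1) * k ^ (n - 1 - (ℓ : ℕ))

/-- The set of traversal strings of vertices where chip `c` can land. -/
def landSet (k n c : ℕ) : Set (Fin n → ℕ) :=
  {t | (∀ ℓ, 1 ≤ t ℓ ∧ t ℓ ≤ k) ∧ chipA n t ≤ (c : ℤ) ∧ (c : ℤ) ≤ chipB k n t}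

/-- The spread of chip `c`: the rightmost index where `c` can land minus the leftmost
index where `c` can land, plus one. -/
noncomputable def spread (k n c : ℕ) : ℤ :=
  let hi : ℕ := sSup (idx k n '' landSet k n c)
  let lo : ℕ := sInf (idx k n '' landSet k n c)
  (hi : ℤ) - (lo : ℤ) + 1

lemma sum_desc (n a : ℕ) (h : a ≤ n) :
    ∑ i ∈ Finset.range a, 2 ^ (n - 1 - i) = 2 ^ n - 2 ^ (n - a) := by
  induction a with
  | zero => simp
  | succ a ih =>
      rw [Finset.sum_range_succ, ih (by omega)]
      have h1 : 2 ^ (n - a) = 2 * 2 ^ (n - (a+1)) := by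
        rw [← pow_succ']
        congr 1
        omega
      have h2 : n - 1 - a = n - (a + 1) := by omega
      have h3 : 2 ^ (n - a) ≤ 2 ^ n := Nat.pow_le_pow_right (by norm_num) (by omega)
      rw [h2]
      omega

lemma sum_tail (n m : ℕ) (h : m ≤ n) :
    ∑ i ∈ Finset.Ico (n - m) n, 2 ^ (n - 1 - i) = 2 ^ m - 1 := by
  induction m with
  | zero => simp
  | succ m ih =>
      have hins : Finset.Ico (n - (m+1)) n = insert (n - (m+1)) (Finset.Ico (n - m) n) := by
        ext x
        simp only [Finset.mem_Ico, Finset.mem_insert]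
        omega
      rw [hins, Finset.sum_insert (by simp; omega), ih (by omega)]
      have h2 : n - 1 - (n - (m+1)) = m := by omega
      rw [h2]
      have : 1 ≤ 2 ^ m := Nat.one_le_two_pow
      have : (2:ℕ) ^ (m+1) = 2 * 2 ^ m := by rw [← pow_succ']
      omega

def wt (n : ℕ) (t : Fin n → ℕ) : ℕ := (Finset.univ.filter (fun ℓ => t ℓ = 2)).card

lemma wt_le (n : ℕ) (t : Fin n → ℕ) : wt n t ≤ n := by
  unfold wt
  have := Finset.card_filter_le (Finset.univ : Finset (Fin n)) (fun ℓ => t ℓ = 2)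
  simpa using this

lemma chipA_eq {n : ℕ} {t : Fin n → ℕ} (ht : ∀ ℓ, 1 ≤ t ℓ ∧ t ℓ ≤ 2) :
    chipA n t = 2 ^ wt n t := by
  unfold chipA wt
  rw [← Finset.prod_filter_mul_prod_filter_not Finset.univ (fun ℓ => t ℓ = 2)]
  have h1 : ∏ ℓ ∈ Finset.univ.filter (fun ℓ => t ℓ = 2), ((t ℓ : ℤ)) =
      2 ^ (Finset.univ.filter (fun ℓ => t ℓ = 2)).card := by
    rw [Finset.prod_congr rfl (fun ℓ hℓ => by
      simp only [Finset.mem_filter] at hℓ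
      rw [hℓ.2]; norm_num : ∀ ℓ ∈ Finset.univ.filter (fun ℓ => t ℓ = 2), ((t ℓ : ℤ)) = 2)]
    rw [Finset.prod_const]
  have h2 : ∏ ℓ ∈ Finset.univ.filter (fun ℓ => ¬ t ℓ = 2), ((t ℓ : ℤ)) = 1 := by
    apply Finset.prod_eq_one
    intro ℓ hℓ
    simp only [Finset.mem_filter] at hℓ
    have := ht ℓ
    have : t ℓ = 1 := by omega
    rw [this]; norm_num
  rw [h1, h2, mul_one]

lemma chipB_eq {n : ℕ} {t : Fin n → ℕ} (ht : ∀ ℓ, 1 ≤ t ℓ ∧ t ℓ ≤ 2) :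
    chipB 2 n t = (2:ℤ) ^ n + 1 - 2 ^ (n - wt n t) := by
  unfold chipB wt
  push_cast
  congr 1
  rw [← Finset.prod_filter_mul_prod_filter_not Finset.univ (fun ℓ => t ℓ = 2)]
  have h1 : ∏ ℓ ∈ Finset.univ.filter (fun ℓ => t ℓ = 2), ((3:ℤ) - (t ℓ : ℤ)) = 1 := by
    apply Finset.prod_eq_one
    intro ℓ hℓ
    simp only [Finset.mem_filter] at hℓ
    rw [hℓ.2]; norm_num
  have h2 : ∏ ℓ ∈ Finset.univ.filter (fun ℓ => ¬ t ℓ = 2), ((3:ℤ) - (t ℓ : ℤ)) =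
      2 ^ (Finset.univ.filter (fun ℓ => ¬ t ℓ = 2)).card := by
    rw [Finset.prod_congr rfl (fun ℓ hℓ => by
      simp only [Finset.mem_filter] at hℓ
      have := ht ℓ
      have h3 : t ℓ = 1 := by omega
      rw [h3]; norm_num :
        ∀ ℓ ∈ Finset.univ.filter (fun ℓ => ¬ t ℓ = 2), ((3:ℤ) - (t ℓ : ℤ)) = 2)]
    rw [Finset.prod_const]
  rw [h1, h2, one_mul]
  congr 1
  have := Finset.card_filter_add_card_filter_not (s := (Finset.univ : Finset (Fin n)))
    (p := fun ℓ => t ℓ = 2)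
  simp only [Finset.card_univ, Fintype.card_fin] at this
  omega

lemma idx_eq {n : ℕ} {t : Fin n → ℕ} (ht : ∀ ℓ, 1 ≤ t ℓ ∧ t ℓ ≤ 2) :
    idx 2 n t = 1 + ∑ ℓ ∈ Finset.univ.filter (fun ℓ => t ℓ = 2), 2 ^ (n - 1 - (ℓ : ℕ)) := by
  unfold idx
  congr 1
  rw [Finset.sum_filter]
  apply Finset.sum_congr rfl
  intro ℓ _
  have := ht ℓ
  by_cases h : t ℓ = 2
  · simp [h]
  · have : t ℓ = 1 := by omega
    simp [h, this]


lemma sum_pow_two_le {n : ℕ} {E : Finset ℕ} (hE : E ⊆ Finset.range n) :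
    ∑ e ∈ E, 2 ^ e ≤ 2 ^ n - 2 ^ (n - E.card) := by
  induction n generalizing E with
  | zero =>
      have : E = ∅ := Finset.subset_empty.mp (by simpa using hE)
      simp [this]
  | succ n ih =>
      have hcard : E.card ≤ n + 1 := by
        simpa using Finset.card_le_card hE
      by_cases h : n ∈ E
      · have hE' : E.erase n ⊆ Finset.range n := by
          intro x hx
          have := hE (Finset.mem_of_mem_erase hx)
          simp only [Finset.mem_range] at this ⊢
          have := Finset.ne_of_mem_erase hx
          omega
        have hsum := ih hE'
        have hc : (E.erase n).card = E.card - 1 := Finset.card_erase_of_mem h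
        have h1 : 1 ≤ E.card := Finset.card_pos.mpr ⟨n, h⟩
        have heq : ∑ e ∈ E, 2 ^ e = 2 ^ n + ∑ e ∈ E.erase n, 2 ^ e := by
          rw [← Finset.add_sum_erase _ _ h]
        rw [hc] at hsum
        have hle : 2 ^ (n - (E.card - 1)) = 2 ^ (n + 1 - E.card) := by
          congr 1
          omega
        have h3 : (2:ℕ) ^ (n+1) = 2 * 2 ^ n := by rw [← pow_succ']
        have hpow : 2 ^ (n + 1 - E.card) ≤ 2 ^ n := Nat.pow_le_pow_right (by norm_num) (by omega)
        rw [heq]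
        omega
      · have hE' : E ⊆ Finset.range n := by
          intro x hx
          have := hE hx
          simp only [Finset.mem_range] at this ⊢
          rcases Nat.lt_succ_iff_lt_or_eq.mp this with h' | h'
          · exact h'
          · exact absurd (h' ▸ hx) h
        have hsum := ih hE'
        have hc : E.card ≤ n := by simpa using Finset.card_le_card hE'
        have h1 : 2 ^ (n - E.card) ≤ 2 ^ n := Nat.pow_le_pow_right (by norm_num) (by omega)
        have h2 : 2 ^ (n + 1 - E.card) = 2 * 2 ^ (n - E.card) := by
          rw [← pow_succ']
          congr 1
          omega
        have h3 : (2:ℕ) ^ (n+1) = 2 * 2 ^ n := by rw [← pow_succ']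
        omega

lemma two_pow_card_le {n : ℕ} {E : Finset ℕ} (hE : E ⊆ Finset.range n) :
    2 ^ E.card ≤ 1 + ∑ e ∈ E, 2 ^ e := by
  induction n generalizing E with
  | zero =>
      have : E = ∅ := Finset.subset_empty.mp (by simpa using hE)
      simp [this]
  | succ n ih =>
      by_cases h : n ∈ E
      · have hE' : E.erase n ⊆ Finset.range n := by
          intro x hx
          have := hE (Finset.mem_of_mem_erase hx)
          simp only [Finset.mem_range] at this ⊢
          have := Finset.ne_of_mem_erase hx
          omega
        have hsum := ih hE'
        have hc : (E.erase n).card = E.card - 1 := Finset.card_erase_of_mem h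
        have h1 : 1 ≤ E.card := Finset.card_pos.mpr ⟨n, h⟩
        have heq : ∑ e ∈ E, 2 ^ e = 2 ^ n + ∑ e ∈ E.erase n, 2 ^ e := by
          rw [← Finset.add_sum_erase _ _ h]
        have hcard : E.card - 1 ≤ n := by
          have := Finset.card_le_card hE'
          simp only [Finset.card_range] at this
          omega
        have hpow : 2 ^ (E.card - 1) ≤ 2 ^ n := Nat.pow_le_pow_right (by norm_num) hcard
        have hsplit : 2 ^ E.card = 2 * 2 ^ (E.card - 1) := by
          rw [← pow_succ']
          congr 1
          omega
        rw [hc] at hsum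
        omega
      · have hE' : E ⊆ Finset.range n := by
          intro x hx
          have := hE hx
          simp only [Finset.mem_range] at this ⊢
          rcases Nat.lt_succ_iff_lt_or_eq.mp this with h' | h'
          · exact h'
          · exact absurd (h' ▸ hx) h
        exact ih hE'

lemma mem_landSet_iff {n c : ℕ} {t : Fin n → ℕ} :
    t ∈ landSet 2 n c ↔
      ((∀ ℓ, 1 ≤ t ℓ ∧ t ℓ ≤ 2) ∧ 2 ^ wt n t ≤ c ∧ 2 ^ (n - wt n t) + c ≤ 2 ^ n + 1) := by
  constructor
  · rintro ⟨ht, hA, hB⟩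
    rw [chipA_eq ht] at hA
    rw [chipB_eq ht] at hB
    refine ⟨ht, ?_, ?_⟩
    · exact_mod_cast hA
    · have : ((2:ℤ) ^ (n - wt n t) + c ≤ 2 ^ n + 1) := by linarith
      exact_mod_cast this
  · rintro ⟨ht, hA, hB⟩
    refine ⟨ht, ?_, ?_⟩
    · rw [chipA_eq ht]
      exact_mod_cast hA
    · rw [chipB_eq ht]
      have : ((2:ℕ) ^ (n - wt n t) : ℤ) + c ≤ 2 ^ n + 1 := by exact_mod_cast hB
      push_cast at this
      linarith

lemma idx_bounds {n : ℕ} {t : Fin n → ℕ} (ht : ∀ ℓ, 1 ≤ t ℓ ∧ t ℓ ≤ 2) :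
    2 ^ wt n t ≤ idx 2 n t ∧ idx 2 n t ≤ 2 ^ n - 2 ^ (n - wt n t) + 1 := by
  rcases Nat.eq_zero_or_pos n with hn | hn
  · subst hn
    simp [idx, wt]
  · have hinj : ∀ x ∈ Finset.univ.filter (fun ℓ : Fin n => t ℓ = 2),
        ∀ y ∈ Finset.univ.filter (fun ℓ : Fin n => t ℓ = 2),
        n - 1 - (x:ℕ) = n - 1 - (y:ℕ) → x = y := by
      intro x _ y _ hxy
      have hx := x.isLt; have hy := y.isLt
      exact Fin.ext (by omega)
    set F := Finset.univ.filter (fun ℓ : Fin n => t ℓ = 2) with hF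
    have hsum : ∑ ℓ ∈ F, 2 ^ (n - 1 - (ℓ:ℕ)) = ∑ e ∈ F.image (fun ℓ : Fin n => n - 1 - (ℓ:ℕ)), 2 ^ e :=
      (Finset.sum_image hinj).symm
    have hcard : (F.image (fun ℓ : Fin n => n - 1 - (ℓ:ℕ))).card = F.card :=
      Finset.card_image_of_injOn (fun x hx y hy h => hinj x hx y hy h)
    have hsub : F.image (fun ℓ : Fin n => n - 1 - (ℓ:ℕ)) ⊆ Finset.range n := by
      intro e he
      rcases Finset.mem_image.mp he with ⟨x, _, rfl⟩
      simp only [Finset.mem_range]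
      omega
    have h1 := sum_pow_two_le hsub
    have h2 := two_pow_card_le hsub
    rw [hcard] at h1 h2
    have hw : wt n t = F.card := rfl
    have hidx : idx 2 n t = 1 + ∑ ℓ ∈ F, 2 ^ (n - 1 - (ℓ:ℕ)) := idx_eq ht
    rw [hidx, hw, hsum]
    omega

/-- the rightmost witness -/
lemma tmax_spec (n a : ℕ) (ha : a ≤ n) :
    let t : Fin n → ℕ := fun ℓ => if (ℓ:ℕ) < a then 2 else 1
    (∀ ℓ, 1 ≤ t ℓ ∧ t ℓ ≤ 2) ∧ wt n t = a ∧ idx 2 n t = 2 ^ n - 2 ^ (n - a) + 1 := by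
  intro t
  have ht : ∀ ℓ, 1 ≤ t ℓ ∧ t ℓ ≤ 2 := by
    intro ℓ
    by_cases h : (ℓ:ℕ) < a
    · rw [show t ℓ = 2 from if_pos h]; omega
    · rw [show t ℓ = 1 from if_neg h]; omega
  have hfe : Finset.univ.filter (fun ℓ : Fin n => t ℓ = 2) =
      Finset.univ.filter (fun ℓ : Fin n => (ℓ:ℕ) < a) := by
    ext ℓ
    simp only [Finset.mem_filter, Finset.mem_univ, true_and]
    by_cases h : (ℓ:ℕ) < a
    · simp [show t ℓ = 2 from if_pos h, h]
    · simp [show t ℓ = 1 from if_neg h, h]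
  have hfil : (Finset.range n).filter (fun i => i < a) = Finset.range a := by
    ext x
    simp only [Finset.mem_filter, Finset.mem_range]
    omega
  have hwt : wt n t = a := by
    unfold wt
    rw [hfe, Finset.card_filter]
    rw [Fin.sum_univ_eq_sum_range (fun i => if i < a then (1:ℕ) else 0) n]
    rw [← Finset.sum_filter, hfil]
    simp
  refine ⟨ht, hwt, ?_⟩
  unfold idx
  have hterm : ∀ ℓ : Fin n, (t ℓ - 1) * 2 ^ (n - 1 - (ℓ:ℕ)) =
      if (ℓ:ℕ) < a then 2 ^ (n - 1 - (ℓ:ℕ)) else 0 := by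
    intro ℓ
    by_cases h : (ℓ:ℕ) < a
    · rw [show t ℓ = 2 from if_pos h, if_pos h]; ring
    · rw [show t ℓ = 1 from if_neg h, if_neg h]; ring
  rw [Finset.sum_congr rfl (fun ℓ _ => hterm ℓ)]
  rw [Fin.sum_univ_eq_sum_range (fun i => if i < a then 2 ^ (n - 1 - i) else 0) n]
  rw [← Finset.sum_filter, hfil, sum_desc n a ha]
  have : 2 ^ (n - a) ≤ 2 ^ n := Nat.pow_le_pow_right (by norm_num) (by omega)
  omega

/-- the leftmost witness -/
lemma tmin_spec (n m : ℕ) (hm : m ≤ n) :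
    let t : Fin n → ℕ := fun ℓ => if n - m ≤ (ℓ:ℕ) then 2 else 1
    (∀ ℓ, 1 ≤ t ℓ ∧ t ℓ ≤ 2) ∧ wt n t = m ∧ idx 2 n t = 2 ^ m := by
  intro t
  have ht : ∀ ℓ, 1 ≤ t ℓ ∧ t ℓ ≤ 2 := by
    intro ℓ
    by_cases h : n - m ≤ (ℓ:ℕ)
    · rw [show t ℓ = 2 from if_pos h]; omega
    · rw [show t ℓ = 1 from if_neg h]; omega
  have hfe : Finset.univ.filter (fun ℓ : Fin n => t ℓ = 2) =
      Finset.univ.filter (fun ℓ : Fin n => n - m ≤ (ℓ:ℕ)) := by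
    ext ℓ
    simp only [Finset.mem_filter, Finset.mem_univ, true_and]
    by_cases h : n - m ≤ (ℓ:ℕ)
    · simp [show t ℓ = 2 from if_pos h, h]
    · simp [show t ℓ = 1 from if_neg h, h]
  have hfil : (Finset.range n).filter (fun i => n - m ≤ i) = Finset.Ico (n - m) n := by
    ext x
    simp only [Finset.mem_filter, Finset.mem_range, Finset.mem_Ico]
    omega
  have hwt : wt n t = m := by
    unfold wt
    rw [hfe, Finset.card_filter]
    rw [Fin.sum_univ_eq_sum_range (fun i => if n - m ≤ i then (1:ℕ) else 0) n]
    rw [← Finset.sum_filter, hfil]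
    simp [Nat.card_Ico]
    omega
  refine ⟨ht, hwt, ?_⟩
  unfold idx
  have hterm : ∀ ℓ : Fin n, (t ℓ - 1) * 2 ^ (n - 1 - (ℓ:ℕ)) =
      if n - m ≤ (ℓ:ℕ) then 2 ^ (n - 1 - (ℓ:ℕ)) else 0 := by
    intro ℓ
    by_cases h : n - m ≤ (ℓ:ℕ)
    · rw [show t ℓ = 2 from if_pos h, if_pos h]; ring
    · rw [show t ℓ = 1 from if_neg h, if_neg h]; ring
  rw [Finset.sum_congr rfl (fun ℓ _ => hterm ℓ)]
  rw [Fin.sum_univ_eq_sum_range (fun i => if n - m ≤ i then 2 ^ (n - 1 - i) else 0) n]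
  rw [← Finset.sum_filter, hfil, sum_tail n m hm]
  have : 1 ≤ 2 ^ m := Nat.one_le_two_pow
  omega

lemma spread_formula (n c : ℕ) (hn : 1 ≤ n) (hc1 : 1 ≤ c) (hc2 : c ≤ 2 ^ n) :
    spread 2 n c = (2:ℤ) ^ n + 2 - 2 ^ (n - Nat.log 2 c) - 2 ^ (n - Nat.log 2 (2 ^ n + 1 - c)) := by
  set a := Nat.log 2 c with ha
  set d := 2 ^ n + 1 - c with hd
  set b := Nat.log 2 d with hb
  have htp : 1 ≤ 2 ^ n := Nat.one_le_two_pow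
  have hd1 : 1 ≤ d := by omega
  have hcd : c + d = 2 ^ n + 1 := by omega
  have hA1 : 2 ^ a ≤ c := Nat.pow_log_le_self 2 (by omega)
  have hA2 : c < 2 ^ (a + 1) := Nat.lt_pow_succ_log_self (by norm_num) c
  have hB1 : 2 ^ b ≤ d := Nat.pow_log_le_self 2 (by omega)
  have hB2 : d < 2 ^ (b + 1) := Nat.lt_pow_succ_log_self (by norm_num) d
  have han : a ≤ n := by
    by_contra h
    have h1 : 2 ^ (n + 1) ≤ 2 ^ a := Nat.pow_le_pow_right (by norm_num) (by omega)
    have h2 : (2:ℕ) ^ (n + 1) = 2 * 2 ^ n := by rw [← pow_succ']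
    omega
  have hdn : d ≤ 2 ^ n := by omega
  have hbn : b ≤ n := by
    by_contra h
    have h1 : 2 ^ (n + 1) ≤ 2 ^ b := Nat.pow_le_pow_right (by norm_num) (by omega)
    have h2 : (2:ℕ) ^ (n + 1) = 2 * 2 ^ n := by rw [← pow_succ']
    omega
  have hab : n ≤ a + b := by
    by_contra h
    rcases Nat.eq_zero_or_pos a with ha0 | ha1
    · have hc1' : c = 1 := by
        rw [ha0] at hA2
        omega
      have : d = 2 ^ n := by omega
      have : b = n := by
        rw [this] at hb
        rw [hb, Nat.log_pow (by norm_num)]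
      omega
    rcases Nat.eq_zero_or_pos b with hb0 | hb1
    · have hd1' : d = 1 := by
        rw [hb0] at hB2
        omega
      have hc2' : c = 2 ^ n := by omega
      have : a = n := by
        rw [hc2'] at ha
        rw [ha, Nat.log_pow (by norm_num)]
      omega
    have h1 : 2 ^ (a + 1) ≤ 2 ^ (a + b) := Nat.pow_le_pow_right (by norm_num) (by omega)
    have h2 : 2 ^ (b + 1) ≤ 2 ^ (a + b) := Nat.pow_le_pow_right (by norm_num) (by omega)
    have h3 : (2:ℕ) ^ (a + b + 1) = 2 * 2 ^ (a + b) := by rw [← pow_succ']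
    have h4 : 2 ^ (a + b + 1) ≤ 2 ^ n := Nat.pow_le_pow_right (by norm_num) (by omega)
    omega
  -- the supremum
  set S := idx 2 n '' landSet 2 n c with hS
  have hMmem : 2 ^ n - 2 ^ (n - a) + 1 ∈ S := by
    obtain ⟨ht, hwt, hidx⟩ := tmax_spec n a han
    refine ⟨_, ?_, hidx⟩
    rw [landSet.eq_def]
    refine mem_landSet_iff.mpr ⟨ht, ?_, ?_⟩
    · rw [hwt]; exact hA1
    · rw [hwt]
      have : 2 ^ (n - a) ≤ 2 ^ b := Nat.pow_le_pow_right (by norm_num) (by omega)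
      omega
  have hMub : ∀ x ∈ S, x ≤ 2 ^ n - 2 ^ (n - a) + 1 := by
    rintro x ⟨t, htmem, rfl⟩
    obtain ⟨ht, h2, h3⟩ := mem_landSet_iff.mp htmem
    have hw : wt n t ≤ a := (Nat.le_log_iff_pow_le (by norm_num) (by omega)).mpr h2
    have hub := (idx_bounds ht).2
    have hp1 : 2 ^ (n - a) ≤ 2 ^ (n - wt n t) := Nat.pow_le_pow_right (by norm_num) (by omega)
    have hp2 : 2 ^ (n - wt n t) ≤ 2 ^ n := Nat.pow_le_pow_right (by norm_num) (by omega)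
    omega
  have hSup : sSup S = 2 ^ n - 2 ^ (n - a) + 1 :=
    le_antisymm (csSup_le ⟨_, hMmem⟩ hMub) (le_csSup ⟨_, hMub⟩ hMmem)
  -- the infimum
  have hmmem : 2 ^ (n - b) ∈ S := by
    obtain ⟨ht, hwt, hidx⟩ := tmin_spec n (n - b) (by omega)
    refine ⟨_, ?_, hidx⟩
    refine mem_landSet_iff.mpr ⟨ht, ?_, ?_⟩
    · rw [hwt]
      have : 2 ^ (n - b) ≤ 2 ^ a := Nat.pow_le_pow_right (by norm_num) (by omega)
      omega
    · rw [hwt]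
      have hnb : n - (n - b) = b := by omega
      rw [hnb]
      omega
  have hmlb : ∀ x ∈ S, 2 ^ (n - b) ≤ x := by
    rintro x ⟨t, htmem, rfl⟩
    obtain ⟨ht, h2, h3⟩ := mem_landSet_iff.mp htmem
    have hw : n - wt n t ≤ b := by
      apply (Nat.le_log_iff_pow_le (by norm_num) (show d ≠ 0 by omega)).mpr
      omega
    have hlb := (idx_bounds ht).1
    have hwtge : n - b ≤ wt n t := by
      have := wt_le n t
      omega
    have hp1 : 2 ^ (n - b) ≤ 2 ^ (wt n t) := Nat.pow_le_pow_right (by norm_num) hwtge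
    omega
  have hInf : sInf S = 2 ^ (n - b) :=
    le_antisymm (csInf_le (OrderBot.bddBelow S) hmmem) (le_csInf ⟨_, hmmem⟩ hmlb)
  have hspread : spread 2 n c = ((sSup S : ℕ) : ℤ) - ((sInf S : ℕ) : ℤ) + 1 := rfl
  rw [hspread, hSup, hInf]
  have hle : (2:ℕ) ^ (n - a) ≤ 2 ^ n := Nat.pow_le_pow_right (by norm_num) (by omega)
  have e1 : ((2 ^ n - 2 ^ (n - a) + 1 : ℕ) : ℤ) =
      ((2 ^ n : ℕ) : ℤ) - ((2 ^ (n - a) : ℕ) : ℤ) + 1 := by omega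
  rw [e1]
  push_cast
  ring

lemma spread_val (n c p q : ℕ) (hn : 1 ≤ n) (hc1 : 1 ≤ c) (hc2 : c ≤ 2 ^ n)
    (hp1 : 2 ^ p ≤ c) (hp2 : c < 2 ^ (p + 1))
    (hq1 : 2 ^ q ≤ 2 ^ n + 1 - c) (hq2 : 2 ^ n + 1 - c < 2 ^ (q + 1)) :
    spread 2 n c = ((2 ^ n : ℕ) : ℤ) + 2 - ((2 ^ (n - p) : ℕ) : ℤ) - ((2 ^ (n - q) : ℕ) : ℤ) := by
  rw [spread_formula n c hn hc1 hc2,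
    Nat.log_eq_of_pow_le_of_lt_pow hp1 hp2,
    Nat.log_eq_of_pow_le_of_lt_pow hq1 hq2]
  push_cast
  ring

lemma pow_two_inj {x y : ℕ} (h : (2:ℕ) ^ x = 2 ^ y) : x = y :=
  Nat.pow_right_injective (le_refl 2) h

/-- for `k = 2` and `n ≥ 2`: `spread 1 = spread (2^n) = 1`, and for every chip
`c` with `2 ≤ c ≤ 2^n - 1`: (a) `2^(n-1) ≤ spread c ≤ 2^n - 2`; (b) `spread c = 2^(n-1)`
iff `c ∈ {2, 3, 2^n - 2, 2^n - 1}`; (c) `spread c = 2^n - 2` iff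
`c ∈ {2^(n-1), 2^(n-1) + 1}`. -/
theorem spreads_binary (n : ℕ) (hn : 2 ≤ n) :
    spread 2 n 1 = 1 ∧ spread 2 n (2 ^ n) = 1 ∧
    ∀ c : ℕ, 2 ≤ c → c ≤ 2 ^ n - 1 →
      ((2 : ℤ) ^ (n - 1) ≤ spread 2 n c ∧ spread 2 n c ≤ (2 : ℤ) ^ n - 2) ∧
      (spread 2 n c = (2 : ℤ) ^ (n - 1) ↔
        (c = 2 ∨ c = 3 ∨ c = 2 ^ n - 2 ∨ c = 2 ^ n - 1)) ∧
      (spread 2 n c = (2 : ℤ) ^ n - 2 ↔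
        (c = 2 ^ (n - 1) ∨ c = 2 ^ (n - 1) + 1)) := by
  have hn1 : 1 ≤ n := by omega
  have h4 : 4 ≤ 2 ^ n := by
    calc (4:ℕ) = 2 ^ 2 := by norm_num
    _ ≤ 2 ^ n := Nat.pow_le_pow_right (by norm_num) hn
  have f1 : (2:ℕ) ^ n = 2 * 2 ^ (n - 1) := by
    rw [← pow_succ']
    congr 1
    omega
  have f2 : 2 ≤ (2:ℕ) ^ (n - 1) := by
    calc (2:ℕ) = 2 ^ 1 := by norm_num
    _ ≤ 2 ^ (n - 1) := Nat.pow_le_pow_right (by norm_num) (by omega)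
  have hone : (2:ℕ) ^ 1 = 2 := by norm_num
  have cast1 : ((2:ℤ)) ^ (n - 1) = ((2 ^ (n - 1) : ℕ) : ℤ) := by push_cast; ring
  have castn : ((2:ℤ)) ^ n = ((2 ^ n : ℕ) : ℤ) := by push_cast; ring
  refine ⟨?_, ?_, ?_⟩
  · rw [spread_formula n 1 hn1 le_rfl (by omega)]
    rw [show 2 ^ n + 1 - 1 = 2 ^ n from by omega, Nat.log_pow (by norm_num),
      Nat.log_one_right, Nat.sub_self, Nat.sub_zero]
    ring
  · rw [spread_formula n (2 ^ n) hn1 (by omega) le_rfl]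
    rw [Nat.log_pow (by norm_num), show 2 ^ n + 1 - 2 ^ n = 1 from by omega,
      Nat.log_one_right, Nat.sub_self, Nat.sub_zero]
    ring
  intro c hc hcn
  have hc2 : c ≤ 2 ^ n := by omega
  have hclt : c < 2 ^ n := by omega
  set a := Nat.log 2 c with ha
  set d := 2 ^ n + 1 - c with hd
  set b := Nat.log 2 d with hb
  have hcd : c + d = 2 ^ n + 1 := by omega
  have hd2 : 2 ≤ d := by omega
  have hdlt : d < 2 ^ n := by omega
  have hA1 : 2 ^ a ≤ c := Nat.pow_log_le_self 2 (by omega)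
  have hA2 : c < 2 ^ (a + 1) := Nat.lt_pow_succ_log_self (by norm_num) c
  have hB1 : 2 ^ b ≤ d := Nat.pow_log_le_self 2 (by omega)
  have hB2 : d < 2 ^ (b + 1) := Nat.lt_pow_succ_log_self (by norm_num) d
  have ha1 : 1 ≤ a := by
    have h21 : (2:ℕ) ^ 1 ≤ c := by omega
    exact (Nat.le_log_iff_pow_le (by norm_num) (by omega)).mpr h21
  have haN : a < n := Nat.log_lt_of_lt_pow (by omega) hclt
  have hb1 : 1 ≤ b := by
    have h21 : (2:ℕ) ^ 1 ≤ d := by omega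
    exact (Nat.le_log_iff_pow_le (by norm_num) (by omega)).mpr h21
  have hbN : b < n := Nat.log_lt_of_lt_pow (by omega) hdlt
  have hsp : spread 2 n c =
      ((2 ^ n : ℕ) : ℤ) + 2 - ((2 ^ (n - a) : ℕ) : ℤ) - ((2 ^ (n - b) : ℕ) : ℤ) :=
    spread_val n c a b hn1 (by omega) hc2 hA1 hA2 hB1 hB2
  have e1 : 2 ≤ (2:ℕ) ^ (n - a) := by
    calc (2:ℕ) = 2 ^ 1 := by norm_num
    _ ≤ 2 ^ (n - a) := Nat.pow_le_pow_right (by norm_num) (by omega)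
  have e2 : (2:ℕ) ^ (n - a) ≤ 2 ^ (n - 1) := Nat.pow_le_pow_right (by norm_num) (by omega)
  have e3 : 2 ≤ (2:ℕ) ^ (n - b) := by
    calc (2:ℕ) = 2 ^ 1 := by norm_num
    _ ≤ 2 ^ (n - b) := Nat.pow_le_pow_right (by norm_num) (by omega)
  have e4 : (2:ℕ) ^ (n - b) ≤ 2 ^ (n - 1) := Nat.pow_le_pow_right (by norm_num) (by omega)
  have hmax : a = n - 1 ∨ b = n - 1 := by
    by_contra h
    push_neg at h
    have p1 : (2:ℕ) ^ (a + 1) ≤ 2 ^ (n - 1) := Nat.pow_le_pow_right (by norm_num) (by omega)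
    have p2 : (2:ℕ) ^ (b + 1) ≤ 2 ^ (n - 1) := Nat.pow_le_pow_right (by norm_num) (by omega)
    omega
  refine ⟨⟨?_, ?_⟩, ⟨?_, ?_⟩, ⟨?_, ?_⟩⟩
  · -- lower bound
    rw [hsp, cast1]
    rcases hmax with h | h
    · rw [show n - a = 1 from by omega, hone]
      omega
    · rw [show n - b = 1 from by omega, hone]
      omega
  · -- upper bound
    rw [hsp, castn]
    omega
  · -- (b) forward
    intro hEq
    rw [hsp, cast1] at hEq
    rcases hmax with h | h
    · rw [show n - a = 1 from by omega, hone] at hEq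
      have hEqN' : (2:ℕ) ^ (n - b) = 2 ^ (n - 1) := by omega
      have hnb : n - b = n - 1 := pow_two_inj hEqN'
      have hbv : b = 1 := by omega
      have q1 : (2:ℕ) ^ b = 2 := by rw [hbv, hone]
      have q2 : (2:ℕ) ^ (b + 1) = 4 := by rw [show b + 1 = 2 from by omega]; norm_num
      omega
    · rw [show n - b = 1 from by omega, hone] at hEq
      have hEqN' : (2:ℕ) ^ (n - a) = 2 ^ (n - 1) := by omega
      have hna : n - a = n - 1 := pow_two_inj hEqN'
      have hav : a = 1 := by omega
      have q1 : (2:ℕ) ^ a = 2 := by rw [hav, hone]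
      have q2 : (2:ℕ) ^ (a + 1) = 4 := by rw [show a + 1 = 2 from by omega]; norm_num
      omega
  · -- (b) backward
    intro hc4
    rcases hc4 with hcv | hcv | hcv | hcv <;> rw [hcv]
    · have hq1 : (2:ℕ) ^ (n - 1) ≤ 2 ^ n + 1 - 2 := by omega
      have hq2 : 2 ^ n + 1 - 2 < 2 ^ (n - 1 + 1) := by
        rw [show n - 1 + 1 = n from by omega]; omega
      have hv := spread_val n 2 1 (n - 1) hn1 (by omega) (by omega)
        (by norm_num) (by norm_num) hq1 hq2
      rw [hv, cast1, show n - (n - 1) = 1 from by omega, hone]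
      omega
    · have hq1 : (2:ℕ) ^ (n - 1) ≤ 2 ^ n + 1 - 3 := by omega
      have hq2 : 2 ^ n + 1 - 3 < 2 ^ (n - 1 + 1) := by
        rw [show n - 1 + 1 = n from by omega]; omega
      have hv := spread_val n 3 1 (n - 1) hn1 (by omega) (by omega)
        (by norm_num) (by norm_num) hq1 hq2
      rw [hv, cast1, show n - (n - 1) = 1 from by omega, hone]
      omega
    · have hp1 : (2:ℕ) ^ (n - 1) ≤ 2 ^ n - 2 := by omega
      have hp2 : 2 ^ n - 2 < 2 ^ (n - 1 + 1) := by
        rw [show n - 1 + 1 = n from by omega]; omega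
      have hq1 : (2:ℕ) ^ 1 ≤ 2 ^ n + 1 - (2 ^ n - 2) := by rw [hone]; omega
      have hq2 : 2 ^ n + 1 - (2 ^ n - 2) < 2 ^ (1 + 1) := by
        rw [show 2 ^ n + 1 - (2 ^ n - 2) = 3 from by omega]; norm_num
      have hv := spread_val n (2 ^ n - 2) (n - 1) 1 hn1 (by omega) (by omega)
        hp1 hp2 hq1 hq2
      rw [hv, cast1, show n - (n - 1) = 1 from by omega, hone]
      omega
    · have hp1 : (2:ℕ) ^ (n - 1) ≤ 2 ^ n - 1 := by omega
      have hp2 : 2 ^ n - 1 < 2 ^ (n - 1 + 1) := by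
        rw [show n - 1 + 1 = n from by omega]; omega
      have hq1 : (2:ℕ) ^ 1 ≤ 2 ^ n + 1 - (2 ^ n - 1) := by rw [hone]; omega
      have hq2 : 2 ^ n + 1 - (2 ^ n - 1) < 2 ^ (1 + 1) := by
        rw [show 2 ^ n + 1 - (2 ^ n - 1) = 2 from by omega]; norm_num
      have hv := spread_val n (2 ^ n - 1) (n - 1) 1 hn1 (by omega) (by omega)
        hp1 hp2 hq1 hq2
      rw [hv, cast1, show n - (n - 1) = 1 from by omega, hone]
      omega
  · -- (c) forward
    intro hEq
    rw [hsp, castn] at hEq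
    have hxa : (2:ℕ) ^ (n - a) = 2 ^ 1 := by rw [hone]; omega
    have hxb : (2:ℕ) ^ (n - b) = 2 ^ 1 := by rw [hone]; omega
    have hna : n - a = 1 := pow_two_inj hxa
    have hnb : n - b = 1 := pow_two_inj hxb
    have hav : a = n - 1 := by omega
    have hbv : b = n - 1 := by omega
    rw [hav] at hA1
    rw [hbv] at hB1
    omega
  · -- (c) backward
    intro hc4
    rcases hc4 with hcv | hcv <;> rw [hcv]
    · have hp2 : (2:ℕ) ^ (n - 1) < 2 ^ (n - 1 + 1) := by
        rw [show n - 1 + 1 = n from by omega]; omega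
      have hq1 : (2:ℕ) ^ (n - 1) ≤ 2 ^ n + 1 - 2 ^ (n - 1) := by omega
      have hq2 : 2 ^ n + 1 - 2 ^ (n - 1) < 2 ^ (n - 1 + 1) := by
        rw [show n - 1 + 1 = n from by omega]; omega
      have hv := spread_val n (2 ^ (n - 1)) (n - 1) (n - 1) hn1 (by omega) (by omega)
        le_rfl hp2 hq1 hq2
      rw [hv, castn, show n - (n - 1) = 1 from by omega, hone]
      omega
    · have hp1 : (2:ℕ) ^ (n - 1) ≤ 2 ^ (n - 1) + 1 := by omega
      have hp2 : (2:ℕ) ^ (n - 1) + 1 < 2 ^ (n - 1 + 1) := by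
        rw [show n - 1 + 1 = n from by omega]; omega
      have hq1 : (2:ℕ) ^ (n - 1) ≤ 2 ^ n + 1 - (2 ^ (n - 1) + 1) := by omega
      have hq2 : 2 ^ n + 1 - (2 ^ (n - 1) + 1) < 2 ^ (n - 1 + 1) := by
        rw [show n - 1 + 1 = n from by omega]; omega
      have hv := spread_val n (2 ^ (n - 1) + 1) (n - 1) (n - 1) hn1 (by omega) (by omega)
        hp1 hp2 hq1 hq2
      rw [hv, castn, show n - (n - 1) = 1 from by omega, hone]
      omega
end
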